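/- In $U$ the identity $[\,E_{1112}E_{112}-r^{3}E_{112}E_{1112},\ f_1\,]=0$ holds. -/
import Mathlib


noncomputable section

set_option maxHeartbeats 1000000

open MvPolynomial

/-- The field `K = ℚ(r,s)` of rational functions in two indeterminates over `ℚ`. -/
abbrev K : Type := FractionRing (MvPolynomial (Fin 2) ℚ)

/-- The first indeterminate `r`. -/
def r : K := algebraMap (MvPolynomial (Fin 2) ℚ) K (X 0)

/-- The second indeterminate `s`. -/
def s : K := algebraMap (MvPolynomial (Fin 2) ℚ) K (X 1)

/-- `Δ = r² + rs + s²`. -/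
def Δ : K := r ^ 2 + r * s + s ^ 2

/-- Generators of the two-parameter quantum group `U_{r,s}(G₂)` inside an associative unital
`K`-algebra `U`, together with the defining relations (G1)–(G6). -/
structure G2 (U : Type*) [Ring U] [Algebra K U] where
  e1 : U
  e2 : U
  f1 : U
  f2 : U
  ω1 : Uˣ
  ω2 : Uˣ
  ω1' : Uˣ
  ω2' : Uˣ
  /- (G1) : the `ω`'s pairwise commute. -/
  G1_a : ω1 * ω2 = ω2 * ω1
  G1_b : ω1 * ω1' = ω1' * ω1
  G1_c : ω1 * ω2' = ω2' * ω1
  G1_d : ω2 * ω1' = ω1' * ω2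
  G1_e : ω2 * ω2' = ω2' * ω2
  G1_f : ω1' * ω2' = ω2' * ω1'
  /- (G2) -/
  G2_a : (ω1 : U) * e1 * ((ω1⁻¹ : Uˣ) : U) = (r * s⁻¹) • e1
  G2_b : (ω1 : U) * f1 * ((ω1⁻¹ : Uˣ) : U) = (r⁻¹ * s) • f1
  G2_c : (ω1 : U) * e2 * ((ω1⁻¹ : Uˣ) : U) = (s ^ 3) • e2
  G2_d : (ω1 : U) * f2 * ((ω1⁻¹ : Uˣ) : U) = (s ^ 3)⁻¹ • f2
  G2_e : (ω2 : U) * e1 * ((ω2⁻¹ : Uˣ) : U) = (r ^ 3)⁻¹ • e1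
  G2_f : (ω2 : U) * f1 * ((ω2⁻¹ : Uˣ) : U) = (r ^ 3) • f1
  G2_g : (ω2 : U) * e2 * ((ω2⁻¹ : Uˣ) : U) = (r ^ 3 * (s ^ 3)⁻¹) • e2
  G2_h : (ω2 : U) * f2 * ((ω2⁻¹ : Uˣ) : U) = ((r ^ 3)⁻¹ * s ^ 3) • f2
  /- (G3) -/
  G3_a : (ω1' : U) * e1 * ((ω1'⁻¹ : Uˣ) : U) = (r⁻¹ * s) • e1
  G3_b : (ω1' : U) * f1 * ((ω1'⁻¹ : Uˣ) : U) = (r * s⁻¹) • f1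
  G3_c : (ω1' : U) * e2 * ((ω1'⁻¹ : Uˣ) : U) = (r ^ 3) • e2
  G3_d : (ω1' : U) * f2 * ((ω1'⁻¹ : Uˣ) : U) = (r ^ 3)⁻¹ • f2
  G3_e : (ω2' : U) * e1 * ((ω2'⁻¹ : Uˣ) : U) = (s ^ 3)⁻¹ • e1
  G3_f : (ω2' : U) * f1 * ((ω2'⁻¹ : Uˣ) : U) = (s ^ 3) • f1
  G3_g : (ω2' : U) * e2 * ((ω2'⁻¹ : Uˣ) : U) = ((r ^ 3)⁻¹ * s ^ 3) • e2
  G3_h : (ω2' : U) * f2 * ((ω2'⁻¹ : Uˣ) : U) = (r ^ 3 * (s ^ 3)⁻¹) • f2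
  /- (G4) -/
  G4_a : e1 * f1 - f1 * e1 = (r - s)⁻¹ • ((ω1 : U) - (ω1' : U))
  G4_b : e2 * f2 - f2 * e2 = (r ^ 3 - s ^ 3)⁻¹ • ((ω2 : U) - (ω2' : U))
  G4_c : e1 * f2 = f2 * e1
  G4_d : e2 * f1 = f1 * e2
  /- (G5) -/
  G5_a : e2 ^ 2 * e1 - ((r ^ 3)⁻¹ + (s ^ 3)⁻¹) • (e2 * e1 * e2)
      + ((r * s) ^ 3)⁻¹ • (e1 * e2 ^ 2) = 0
  G5_b : e1 ^ 4 * e2 - ((r + s) * (r ^ 2 + s ^ 2)) • (e1 ^ 3 * e2 * e1)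
      + (r * s * (r ^ 2 + s ^ 2) * (r ^ 2 + r * s + s ^ 2)) • (e1 ^ 2 * e2 * e1 ^ 2)
      - ((r * s) ^ 3 * (r + s) * (r ^ 2 + s ^ 2)) • (e1 * e2 * e1 ^ 3)
      + ((r * s) ^ 6) • (e2 * e1 ^ 4) = 0
  /- (G6) -/
  G6_a : f1 * f2 ^ 2 - ((r ^ 3)⁻¹ + (s ^ 3)⁻¹) • (f2 * f1 * f2)
      + ((r * s) ^ 3)⁻¹ • (f2 ^ 2 * f1) = 0
  G6_b : f2 * f1 ^ 4 - ((r + s) * (r ^ 2 + s ^ 2)) • (f1 * f2 * f1 ^ 3)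
      + (r * s * (r ^ 2 + s ^ 2) * (r ^ 2 + r * s + s ^ 2)) • (f1 ^ 2 * f2 * f1 ^ 2)
      - ((r * s) ^ 3 * (r + s) * (r ^ 2 + s ^ 2)) • (f1 ^ 3 * f2 * f1)
      + ((r * s) ^ 6) • (f1 ^ 4 * f2) = 0

namespace G2

variable {U : Type*} [Ring U] [Algebra K U]

/-- The quantum root vector `E₁₂ = e₁e₂ - s³e₂e₁`. -/
def E12 (d : G2 U) : U := d.e1 * d.e2 - (s ^ 3) • (d.e2 * d.e1)

/-- The quantum root vector `F₁₂ = f₂f₁ - r³f₁f₂`. -/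
def F12 (d : G2 U) : U := d.f2 * d.f1 - (r ^ 3) • (d.f1 * d.f2)

/-- The quantum root vector `E₁₁₂ = e₁E₁₂ - rs²E₁₂e₁`. -/
def E112 (d : G2 U) : U := d.e1 * d.E12 - (r * s ^ 2) • (d.E12 * d.e1)

/-- The quantum root vector `F₁₁₂ = F₁₂f₁ - r²sf₁F₁₂`. -/
def F112 (d : G2 U) : U := d.F12 * d.f1 - (r ^ 2 * s) • (d.f1 * d.F12)

/-- The quantum root vector `E₁₁₁₂ = e₁E₁₁₂ - r²sE₁₁₂e₁`. -/
def E1112 (d : G2 U) : U := d.e1 * d.E112 - (r ^ 2 * s) • (d.E112 * d.e1)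

/-- The quantum root vector `F₁₁₁₂ = F₁₁₂f₁ - rs²f₁F₁₁₂`. -/
def F1112 (d : G2 U) : U := d.F112 * d.f1 - (r * s ^ 2) • (d.f1 * d.F112)

/-- The quantum root vector `E₂₁ = e₂e₁ - r⁻³e₁e₂`. -/
def E21 (d : G2 U) : U := d.e2 * d.e1 - (r ^ 3)⁻¹ • (d.e1 * d.e2)

end G2


structure Gen (F : Type*) (U : Type*) [Field F] [Ring U] [Algebra F U] where
  r : F
  s : F
  a : F
  b : F
  t : F
  p : F
  e1 : U
  e2 : U
  f1 : U
  w : U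
  w1 : U
  ha : r * a = 1
  hb : s * b = 1
  ht : (r - s) * t = 1
  hp : (r + s) * p = 1
  he2f1 : e2 * f1 = f1 * e2
  he1f1 : e1 * f1 = f1 * e1 + t • w1 - t • w
  hw1e1 : w1 * e1 = (r * b) • (e1 * w1)
  hw1e2 : w1 * e2 = (s ^ 3) • (e2 * w1)
  hwe1 : w * e1 = (a * s) • (e1 * w)
  hwe2 : w * e2 = (r ^ 3) • (e2 * w)
  hS1 : e2 * (e2 * e1) - (a ^ 3 + b ^ 3) • (e2 * (e1 * e2))
      + (a ^ 3 * b ^ 3) • (e1 * (e2 * e2)) = 0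
  hS2 : e1 * (e1 * (e1 * (e1 * e2)))
      - ((r + s) * (r ^ 2 + s ^ 2)) • (e1 * (e1 * (e1 * (e2 * e1))))
      + (r * s * (r ^ 2 + s ^ 2) * (r ^ 2 + r * s + s ^ 2)) • (e1 * (e1 * (e2 * (e1 * e1))))
      - ((r * s) ^ 3 * (r + s) * (r ^ 2 + s ^ 2)) • (e1 * (e2 * (e1 * (e1 * e1))))
      + ((r * s) ^ 6) • (e2 * (e1 * (e1 * (e1 * e1)))) = 0

namespace Gen

variable {F : Type*} {U : Type*} [Field F] [Ring U] [Algebra F U] (g : Gen F U)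

def E12 : U := g.e1 * g.e2 - (g.s ^ 3) • (g.e2 * g.e1)
def E112 : U := g.e1 * g.E12 - (g.r * g.s ^ 2) • (g.E12 * g.e1)
def E1112 : U := g.e1 * g.E112 - (g.r ^ 2 * g.s) • (g.E112 * g.e1)

lemma hr : g.r ≠ 0 := left_ne_zero_of_mul_eq_one g.ha
lemma hs : g.s ≠ 0 := left_ne_zero_of_mul_eq_one g.hb
lemma hrs : g.r - g.s ≠ 0 := left_ne_zero_of_mul_eq_one g.ht
lemma hrps : g.r + g.s ≠ 0 := left_ne_zero_of_mul_eq_one g.hp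

lemma he1f1z (z : U) : g.e1 * (g.f1 * z)
    = g.f1 * (g.e1 * z) + g.t • (g.w1 * z) - g.t • (g.w * z) := by
  rw [← mul_assoc, g.he1f1, sub_mul, add_mul, smul_mul_assoc, smul_mul_assoc, mul_assoc]

lemma he2f1z (z : U) : g.e2 * (g.f1 * z) = g.f1 * (g.e2 * z) := by
  rw [← mul_assoc, g.he2f1, mul_assoc]

lemma hw1e1z (z : U) : g.w1 * (g.e1 * z) = (g.r * g.b) • (g.e1 * (g.w1 * z)) := by
  rw [← mul_assoc, g.hw1e1, smul_mul_assoc, mul_assoc]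

lemma hw1e2z (z : U) : g.w1 * (g.e2 * z) = (g.s ^ 3) • (g.e2 * (g.w1 * z)) := by
  rw [← mul_assoc, g.hw1e2, smul_mul_assoc, mul_assoc]

lemma hwe1z (z : U) : g.w * (g.e1 * z) = (g.a * g.s) • (g.e1 * (g.w * z)) := by
  rw [← mul_assoc, g.hwe1, smul_mul_assoc, mul_assoc]

lemma hwe2z (z : U) : g.w * (g.e2 * z) = (g.r ^ 3) • (g.e2 * (g.w * z)) := by
  rw [← mul_assoc, g.hwe2, smul_mul_assoc, mul_assoc]

lemma L2z (z : U) : g.E112 * (g.f1 * z)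
    = g.f1 * (g.E112 * z) - ((g.r + g.s) ^ 2) • (g.E12 * (g.w * z)) := by
  simp only [E112, E12, mul_add, add_mul, mul_sub, sub_mul, smul_mul_assoc, mul_smul_comm,
    smul_smul, smul_sub, smul_add, mul_assoc, he2f1z, he1f1z, hw1e1z, hw1e2z, hwe1z, hwe2z]
  match_scalars
  · ring1
  · apply mul_left_cancel₀ (show (g.r ^ 0 * g.s ^ 1 * (g.r - g.s) ^ 0 * (g.r + g.s) ^ 0 : F) ≠ 0 from mul_ne_zero (mul_ne_zero (mul_ne_zero (pow_ne_zero _ g.hr) (pow_ne_zero _ g.hs)) (pow_ne_zero _ g.hrs)) (pow_ne_zero _ g.hrps))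
    linear_combination (g.r * g.s ^ 3 * g.t) * g.hb
  · apply mul_left_cancel₀ (show (g.r ^ 1 * g.s ^ 0 * (g.r - g.s) ^ 1 * (g.r + g.s) ^ 0 : F) ≠ 0 from mul_ne_zero (mul_ne_zero (mul_ne_zero (pow_ne_zero _ g.hr) (pow_ne_zero _ g.hs)) (pow_ne_zero _ g.hrs)) (pow_ne_zero _ g.hrps))
    linear_combination (g.r ^ 3 * g.s ^ 2 * g.t + (-1) * g.r ^ 4 * g.s * g.t) * g.ha + (g.r * g.s ^ 3 + g.r ^ 2 * g.s ^ 2 + (-1) * g.r ^ 3 * g.s + (-1) * g.r ^ 4) * g.ht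
  · ring1
  · apply mul_left_cancel₀ (show (g.r ^ 0 * g.s ^ 1 * (g.r - g.s) ^ 0 * (g.r + g.s) ^ 0 : F) ≠ 0 from mul_ne_zero (mul_ne_zero (mul_ne_zero (pow_ne_zero _ g.hr) (pow_ne_zero _ g.hs)) (pow_ne_zero _ g.hrs)) (pow_ne_zero _ g.hrps))
    linear_combination ((-1) * g.r * g.s ^ 6 * g.t) * g.hb
  · apply mul_left_cancel₀ (show (g.r ^ 1 * g.s ^ 0 * (g.r - g.s) ^ 1 * (g.r + g.s) ^ 0 : F) ≠ 0 from mul_ne_zero (mul_ne_zero (mul_ne_zero (pow_ne_zero _ g.hr) (pow_ne_zero _ g.hs)) (pow_ne_zero _ g.hrs)) (pow_ne_zero _ g.hrps))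
    linear_combination (g.r * g.s ^ 7 * g.t + (-1) * g.r ^ 2 * g.s ^ 6 * g.t + (-1) * g.r ^ 3 * g.s ^ 5 * g.t + g.r ^ 5 * g.s ^ 3 * g.t) * g.ha + ((-1) * g.r * g.s ^ 6 + (-1) * g.r ^ 2 * g.s ^ 5 + g.r ^ 3 * g.s ^ 4 + g.r ^ 4 * g.s ^ 3) * g.ht
  · ring1

lemma L3z (z : U) : g.E1112 * (g.f1 * z)
    = g.f1 * (g.E1112 * z) - (g.r ^ 2 + g.r * g.s + g.s ^ 2) • (g.E112 * (g.w * z)) := by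
  simp only [E1112, E112, E12, mul_add, add_mul, mul_sub, sub_mul, smul_mul_assoc, mul_smul_comm,
    smul_smul, smul_sub, smul_add, mul_assoc, he2f1z, he1f1z, hw1e1z, hw1e2z, hwe1z, hwe2z]
  match_scalars
  · ring1
  · apply mul_left_cancel₀ (show (g.r ^ 0 * g.s ^ 2 * (g.r - g.s) ^ 0 * (g.r + g.s) ^ 0 : F) ≠ 0 from mul_ne_zero (mul_ne_zero (mul_ne_zero (pow_ne_zero _ g.hr) (pow_ne_zero _ g.hs)) (pow_ne_zero _ g.hrs)) (pow_ne_zero _ g.hrps))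
    linear_combination (g.r * g.s ^ 4 * g.t + g.r ^ 2 * g.s ^ 3 * g.t + g.r ^ 2 * g.s ^ 4 * g.b * g.t) * g.hb
  · apply mul_left_cancel₀ (show (g.r ^ 2 * g.s ^ 0 * (g.r - g.s) ^ 1 * (g.r + g.s) ^ 0 : F) ≠ 0 from mul_ne_zero (mul_ne_zero (mul_ne_zero (pow_ne_zero _ g.hr) (pow_ne_zero _ g.hs)) (pow_ne_zero _ g.hrs)) (pow_ne_zero _ g.hrps))
    linear_combination (g.r ^ 3 * g.s ^ 3 * g.t + g.r ^ 4 * g.s ^ 3 * g.a * g.t + (-1) * g.r ^ 5 * g.s * g.t + (-1) * g.r ^ 5 * g.s ^ 2 * g.a * g.t) * g.ha + (g.r ^ 2 * g.s ^ 3 + (-1) * g.r ^ 5) * g.ht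
  · ring1
  · apply mul_left_cancel₀ (show (g.r ^ 0 * g.s ^ 2 * (g.r - g.s) ^ 0 * (g.r + g.s) ^ 0 : F) ≠ 0 from mul_ne_zero (mul_ne_zero (mul_ne_zero (pow_ne_zero _ g.hr) (pow_ne_zero _ g.hs)) (pow_ne_zero _ g.hrs)) (pow_ne_zero _ g.hrps))
    linear_combination ((-1) * g.r * g.s ^ 7 * g.t + (-1) * g.r ^ 2 * g.s ^ 6 * g.t + (-1) * g.r ^ 2 * g.s ^ 7 * g.b * g.t + (-1) * g.r ^ 3 * g.s ^ 5 * g.t + (-1) * g.r ^ 3 * g.s ^ 6 * g.b * g.t + (-1) * g.r ^ 4 * g.s ^ 5 * g.b * g.t) * g.hb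
  · apply mul_left_cancel₀ (show (g.r ^ 2 * g.s ^ 0 * (g.r - g.s) ^ 1 * (g.r + g.s) ^ 0 : F) ≠ 0 from mul_ne_zero (mul_ne_zero (mul_ne_zero (pow_ne_zero _ g.hr) (pow_ne_zero _ g.hs)) (pow_ne_zero _ g.hrs)) (pow_ne_zero _ g.hrps))
    linear_combination (g.r ^ 2 * g.s ^ 7 * g.t + (-1) * g.r ^ 3 * g.s ^ 6 * g.t + (-1) * g.r ^ 4 * g.s ^ 5 * g.t + (-1) * g.r ^ 4 * g.s ^ 6 * g.a * g.t + (-1) * g.r ^ 5 * g.s ^ 4 * g.t + g.r ^ 6 * g.s ^ 3 * g.t + g.r ^ 7 * g.s ^ 2 * g.t + g.r ^ 7 * g.s ^ 3 * g.a * g.t) * g.ha + ((-1) * g.r ^ 2 * g.s ^ 6 + (-1) * g.r ^ 3 * g.s ^ 5 + g.r ^ 5 * g.s ^ 3 + g.r ^ 6 * g.s ^ 2) * g.ht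
  · ring1
  · apply mul_left_cancel₀ (show (g.r ^ 0 * g.s ^ 2 * (g.r - g.s) ^ 0 * (g.r + g.s) ^ 0 : F) ≠ 0 from mul_ne_zero (mul_ne_zero (mul_ne_zero (pow_ne_zero _ g.hr) (pow_ne_zero _ g.hs)) (pow_ne_zero _ g.hrs)) (pow_ne_zero _ g.hrps))
    linear_combination (g.r ^ 3 * g.s ^ 8 * g.t + g.r ^ 3 * g.s ^ 9 * g.b * g.t + g.r ^ 4 * g.s ^ 8 * g.b * g.t) * g.hb
  · apply mul_left_cancel₀ (show (g.r ^ 2 * g.s ^ 0 * (g.r - g.s) ^ 1 * (g.r + g.s) ^ 0 : F) ≠ 0 from mul_ne_zero (mul_ne_zero (mul_ne_zero (pow_ne_zero _ g.hr) (pow_ne_zero _ g.hs)) (pow_ne_zero _ g.hrs)) (pow_ne_zero _ g.hrps))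
    linear_combination ((-1) * g.r ^ 3 * g.s ^ 9 * g.t + g.r ^ 4 * g.s ^ 8 * g.t + (-1) * g.r ^ 4 * g.s ^ 9 * g.a * g.t + g.r ^ 5 * g.s ^ 7 * g.t + (2) * g.r ^ 5 * g.s ^ 8 * g.a * g.t + (-1) * g.r ^ 7 * g.s ^ 5 * g.t + (-1) * g.r ^ 8 * g.s ^ 5 * g.a * g.t) * g.ha + (g.r ^ 3 * g.s ^ 8 + (-1) * g.r ^ 6 * g.s ^ 5) * g.ht
  · ring1

lemma W2z (z : U) : g.w * (g.E112 * z) = (g.r * g.s ^ 2) • (g.E112 * (g.w * z)) := by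
  simp only [E112, E12, mul_add, add_mul, mul_sub, sub_mul, smul_mul_assoc, mul_smul_comm,
    smul_smul, smul_sub, smul_add, mul_assoc, hwe1z, hwe2z]
  match_scalars
  · apply mul_left_cancel₀ (show (g.r ^ 2 * g.s ^ 0 * (g.r - g.s) ^ 0 * (g.r + g.s) ^ 0 : F) ≠ 0 from mul_ne_zero (mul_ne_zero (mul_ne_zero (pow_ne_zero _ g.hr) (pow_ne_zero _ g.hs)) (pow_ne_zero _ g.hrs)) (pow_ne_zero _ g.hrps))
    linear_combination (g.r ^ 3 * g.s ^ 2 + g.r ^ 4 * g.s ^ 2 * g.a) * g.ha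
  · apply mul_left_cancel₀ (show (g.r ^ 2 * g.s ^ 0 * (g.r - g.s) ^ 0 * (g.r + g.s) ^ 0 : F) ≠ 0 from mul_ne_zero (mul_ne_zero (mul_ne_zero (pow_ne_zero _ g.hr) (pow_ne_zero _ g.hs)) (pow_ne_zero _ g.hrs)) (pow_ne_zero _ g.hrps))
    linear_combination ((-1) * g.r ^ 3 * g.s ^ 5 + (-1) * g.r ^ 4 * g.s ^ 4 + (-1) * g.r ^ 4 * g.s ^ 5 * g.a + (-1) * g.r ^ 5 * g.s ^ 4 * g.a) * g.ha
  · apply mul_left_cancel₀ (show (g.r ^ 2 * g.s ^ 0 * (g.r - g.s) ^ 0 * (g.r + g.s) ^ 0 : F) ≠ 0 from mul_ne_zero (mul_ne_zero (mul_ne_zero (pow_ne_zero _ g.hr) (pow_ne_zero _ g.hs)) (pow_ne_zero _ g.hrs)) (pow_ne_zero _ g.hrps))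
    linear_combination (g.r ^ 4 * g.s ^ 7 + g.r ^ 5 * g.s ^ 7 * g.a) * g.ha

lemma W3z (z : U) : g.w * (g.E1112 * z) = (g.s ^ 3) • (g.E1112 * (g.w * z)) := by
  simp only [E1112, E112, E12, mul_add, add_mul, mul_sub, sub_mul, smul_mul_assoc, mul_smul_comm,
    smul_smul, smul_sub, smul_add, mul_assoc, hwe1z, hwe2z]
  match_scalars
  · apply mul_left_cancel₀ (show (g.r ^ 3 * g.s ^ 0 * (g.r - g.s) ^ 0 * (g.r + g.s) ^ 0 : F) ≠ 0 from mul_ne_zero (mul_ne_zero (mul_ne_zero (pow_ne_zero _ g.hr) (pow_ne_zero _ g.hs)) (pow_ne_zero _ g.hrs)) (pow_ne_zero _ g.hrps))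
    linear_combination (g.r ^ 3 * g.s ^ 3 + g.r ^ 4 * g.s ^ 3 * g.a + g.r ^ 5 * g.s ^ 3 * g.a ^ 2) * g.ha
  · apply mul_left_cancel₀ (show (g.r ^ 3 * g.s ^ 0 * (g.r - g.s) ^ 0 * (g.r + g.s) ^ 0 : F) ≠ 0 from mul_ne_zero (mul_ne_zero (mul_ne_zero (pow_ne_zero _ g.hr) (pow_ne_zero _ g.hs)) (pow_ne_zero _ g.hrs)) (pow_ne_zero _ g.hrps))
    linear_combination ((-1) * g.r ^ 3 * g.s ^ 6 + (-1) * g.r ^ 4 * g.s ^ 5 + (-1) * g.r ^ 4 * g.s ^ 6 * g.a + (-1) * g.r ^ 5 * g.s ^ 4 + (-1) * g.r ^ 5 * g.s ^ 5 * g.a + (-1) * g.r ^ 5 * g.s ^ 6 * g.a ^ 2 + (-1) * g.r ^ 6 * g.s ^ 4 * g.a + (-1) * g.r ^ 6 * g.s ^ 5 * g.a ^ 2 + (-1) * g.r ^ 7 * g.s ^ 4 * g.a ^ 2) * g.ha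
  · apply mul_left_cancel₀ (show (g.r ^ 3 * g.s ^ 0 * (g.r - g.s) ^ 0 * (g.r + g.s) ^ 0 : F) ≠ 0 from mul_ne_zero (mul_ne_zero (mul_ne_zero (pow_ne_zero _ g.hr) (pow_ne_zero _ g.hs)) (pow_ne_zero _ g.hrs)) (pow_ne_zero _ g.hrps))
    linear_combination (g.r ^ 4 * g.s ^ 8 + g.r ^ 5 * g.s ^ 7 + g.r ^ 5 * g.s ^ 8 * g.a + g.r ^ 6 * g.s ^ 6 + g.r ^ 6 * g.s ^ 7 * g.a + g.r ^ 6 * g.s ^ 8 * g.a ^ 2 + g.r ^ 7 * g.s ^ 6 * g.a + g.r ^ 7 * g.s ^ 7 * g.a ^ 2 + g.r ^ 8 * g.s ^ 6 * g.a ^ 2) * g.ha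
  · apply mul_left_cancel₀ (show (g.r ^ 3 * g.s ^ 0 * (g.r - g.s) ^ 0 * (g.r + g.s) ^ 0 : F) ≠ 0 from mul_ne_zero (mul_ne_zero (mul_ne_zero (pow_ne_zero _ g.hr) (pow_ne_zero _ g.hs)) (pow_ne_zero _ g.hrs)) (pow_ne_zero _ g.hrps))
    linear_combination ((-1) * g.r ^ 6 * g.s ^ 9 + (-1) * g.r ^ 7 * g.s ^ 9 * g.a + (-1) * g.r ^ 8 * g.s ^ 9 * g.a ^ 2) * g.ha

lemma L2 : g.E112 * g.f1
    = g.f1 * g.E112 - ((g.r + g.s) ^ 2) • (g.E12 * g.w) := by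
  simpa using g.L2z 1

lemma L3 : g.E1112 * g.f1
    = g.f1 * g.E1112 - (g.r ^ 2 + g.r * g.s + g.s ^ 2) • (g.E112 * g.w) := by
  simpa using g.L3z 1

lemma W2 : g.w * g.E112 = (g.r * g.s ^ 2) • (g.E112 * g.w) := by
  simpa using g.W2z 1

lemma W3 : g.w * g.E1112 = (g.s ^ 3) • (g.E1112 * g.w) := by
  simpa using g.W3z 1

lemma serre_z (z : U) : g.E1112 * (g.E12 * z)
    = (g.r ^ 3 * g.s ^ 3) • (g.E12 * (g.E1112 * z))
      + ((g.r ^ 2 + g.r * g.s + g.s ^ 2) * g.r * (g.r - g.s) * g.p) • (g.E112 * (g.E112 * z)) := by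
  have key : g.E1112 * (g.E12 * z)
      - (g.r ^ 3 * g.s ^ 3) • (g.E12 * (g.E1112 * z))
      - ((g.r ^ 2 + g.r * g.s + g.s ^ 2) * g.r * (g.r - g.s) * g.p) • (g.E112 * (g.E112 * z))
      = (-(g.r ^ 8 * g.s ^ 14) * g.p) •
          ((g.e2 * (g.e2 * g.e1) - (g.a ^ 3 + g.b ^ 3) • (g.e2 * (g.e1 * g.e2))
            + (g.a ^ 3 * g.b ^ 3) • (g.e1 * (g.e2 * g.e2))) * (g.e1 * (g.e1 * (g.e1 * z))))
        + (g.r ^ 5 * g.s ^ 9 * (g.r ^ 2 + g.r * g.s + g.s ^ 2) * g.p) •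
          (g.e1 * ((g.e2 * (g.e2 * g.e1) - (g.a ^ 3 + g.b ^ 3) • (g.e2 * (g.e1 * g.e2))
            + (g.a ^ 3 * g.b ^ 3) • (g.e1 * (g.e2 * g.e2))) * (g.e1 * (g.e1 * z))))
        + (-(g.r ^ 3 * g.s ^ 5 * (g.r ^ 2 + g.r * g.s + g.s ^ 2)) * g.p) •
          (g.e1 * (g.e1 * ((g.e2 * (g.e2 * g.e1) - (g.a ^ 3 + g.b ^ 3) • (g.e2 * (g.e1 * g.e2))
            + (g.a ^ 3 * g.b ^ 3) • (g.e1 * (g.e2 * g.e2))) * (g.e1 * z))))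
        + (g.r ^ 2 * g.s ^ 2 * g.p) •
          (g.e1 * (g.e1 * (g.e1 * ((g.e2 * (g.e2 * g.e1) - (g.a ^ 3 + g.b ^ 3) • (g.e2 * (g.e1 * g.e2))
            + (g.a ^ 3 * g.b ^ 3) • (g.e1 * (g.e2 * g.e2))) * z))))
        + (g.r ^ 2 * g.s ^ 8 * g.p) •
          (g.e2 * ((g.e1 * (g.e1 * (g.e1 * (g.e1 * g.e2)))
            - ((g.r + g.s) * (g.r ^ 2 + g.s ^ 2)) • (g.e1 * (g.e1 * (g.e1 * (g.e2 * g.e1))))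
            + (g.r * g.s * (g.r ^ 2 + g.s ^ 2) * (g.r ^ 2 + g.r * g.s + g.s ^ 2)) • (g.e1 * (g.e1 * (g.e2 * (g.e1 * g.e1))))
            - ((g.r * g.s) ^ 3 * (g.r + g.s) * (g.r ^ 2 + g.s ^ 2)) • (g.e1 * (g.e2 * (g.e1 * (g.e1 * g.e1))))
            + ((g.r * g.s) ^ 6) • (g.e2 * (g.e1 * (g.e1 * (g.e1 * g.e1))))) * z))
        + (-(g.a * g.b) * g.p) •
          ((g.e1 * (g.e1 * (g.e1 * (g.e1 * g.e2)))
            - ((g.r + g.s) * (g.r ^ 2 + g.s ^ 2)) • (g.e1 * (g.e1 * (g.e1 * (g.e2 * g.e1))))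
            + (g.r * g.s * (g.r ^ 2 + g.s ^ 2) * (g.r ^ 2 + g.r * g.s + g.s ^ 2)) • (g.e1 * (g.e1 * (g.e2 * (g.e1 * g.e1))))
            - ((g.r * g.s) ^ 3 * (g.r + g.s) * (g.r ^ 2 + g.s ^ 2)) • (g.e1 * (g.e2 * (g.e1 * (g.e1 * g.e1))))
            + ((g.r * g.s) ^ 6) • (g.e2 * (g.e1 * (g.e1 * (g.e1 * g.e1))))) * (g.e2 * z)) := by
    simp only [E1112, E112, E12, mul_add, add_mul, mul_sub, sub_mul, smul_mul_assoc,
      mul_smul_comm, smul_smul, smul_sub, smul_add, mul_assoc]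
    match_scalars
    · apply mul_left_cancel₀ (show (g.r ^ 3 * g.s ^ 3 * (g.r - g.s) ^ 0 * (g.r + g.s) ^ 1 : F) ≠ 0 from mul_ne_zero (mul_ne_zero (mul_ne_zero (pow_ne_zero _ g.hr) (pow_ne_zero _ g.hs)) (pow_ne_zero _ g.hrs)) (pow_ne_zero _ g.hrps))
      linear_combination (g.r ^ 2 * g.s ^ 6 * g.p + (-1) * g.r ^ 2 * g.s ^ 7 * g.b * g.p + g.r ^ 3 * g.s ^ 5 * g.p + (-2) * g.r ^ 3 * g.s ^ 6 * g.b * g.p + g.r ^ 3 * g.s ^ 6 * g.a * g.p + (-2) * g.r ^ 4 * g.s ^ 5 * g.b * g.p + g.r ^ 4 * g.s ^ 5 * g.a * g.p + g.r ^ 4 * g.s ^ 6 * g.a ^ 2 * g.p + (-2) * g.r ^ 5 * g.s ^ 4 * g.b * g.p + g.r ^ 5 * g.s ^ 5 * g.a ^ 2 * g.p + (-1) * g.r ^ 6 * g.s ^ 3 * g.b * g.p) * g.ha + ((-1) * g.r ^ 2 * g.s ^ 6 * g.p + (-2) * g.r ^ 3 * g.s ^ 5 * g.p + (-2) * g.r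 ^ 4 * g.s ^ 4 * g.p + (-1) * g.r ^ 5 * g.s ^ 3 * g.p + g.r ^ 5 * g.s ^ 4 * g.b * g.p + g.r ^ 5 * g.s ^ 5 * g.b ^ 2 * g.p + g.r ^ 6 * g.s ^ 3 * g.b * g.p + g.r ^ 6 * g.s ^ 4 * g.b ^ 2 * g.p) * g.hb + ((-1) * g.r ^ 3 * g.s ^ 4 + (-1) * g.r ^ 4 * g.s ^ 3) * g.hp
    · apply mul_left_cancel₀ (show (g.r ^ 1 * g.s ^ 1 * (g.r - g.s) ^ 0 * (g.r + g.s) ^ 1 : F) ≠ 0 from mul_ne_zero (mul_ne_zero (mul_ne_zero (pow_ne_zero _ g.hr) (pow_ne_zero _ g.hs)) (pow_ne_zero _ g.hrs)) (pow_ne_zero _ g.hrps))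
      linear_combination (g.r * g.s ^ 7 * g.b * g.p + (2) * g.r ^ 2 * g.s ^ 6 * g.b * g.p + (3) * g.r ^ 3 * g.s ^ 5 * g.b * g.p + (3) * g.r ^ 4 * g.s ^ 4 * g.b * g.p + (2) * g.r ^ 5 * g.s ^ 3 * g.b * g.p + g.r ^ 6 * g.s ^ 2 * g.b * g.p) * g.ha + (g.r * g.s ^ 6 * g.p + (2) * g.r ^ 2 * g.s ^ 5 * g.p + (3) * g.r ^ 3 * g.s ^ 4 * g.p + (3) * g.r ^ 4 * g.s ^ 3 * g.p + (2) * g.r ^ 5 * g.s ^ 2 * g.p + g.r ^ 6 * g.s * g.p) * g.hb + (g.r * g.s ^ 5 + (2) * g.r ^ 2 * g.s ^ 4 + (2) * g.r ^ 3 * g.s ^ 3 + g.r ^ 4 * g.s ^ 2) * g.hp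
    · apply mul_left_cancel₀ (show (g.r ^ 1 * g.s ^ 1 * (g.r - g.s) ^ 0 * (g.r + g.s) ^ 1 : F) ≠ 0 from mul_ne_zero (mul_ne_zero (mul_ne_zero (pow_ne_zero _ g.hr) (pow_ne_zero _ g.hs)) (pow_ne_zero _ g.hrs)) (pow_ne_zero _ g.hrps))
      linear_combination ((-1) * g.r ^ 3 * g.s ^ 8 * g.b * g.p + (-2) * g.r ^ 4 * g.s ^ 7 * g.b * g.p + (-2) * g.r ^ 5 * g.s ^ 6 * g.b * g.p + (-2) * g.r ^ 6 * g.s ^ 5 * g.b * g.p + (-1) * g.r ^ 7 * g.s ^ 4 * g.b * g.p) * g.ha + ((-1) * g.r ^ 3 * g.s ^ 7 * g.p + (-2) * g.r ^ 4 * g.s ^ 6 * g.p + (-2) * g.r ^ 5 * g.s ^ 5 * g.p + (-2) * g.r ^ 6 * g.s ^ 4 * g.p + (-1) * g.r ^ 7 * g.s ^ 3 * g.p) * g.hb + ((-1) * g.r ^ 2 * g.s ^ 7 + (-2) * g.r ^ 3 * g.s ^ 6 + (-1) * g.r ^ 4 * g.s ^ 5) * g.hp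
    · apply mul_left_cancel₀ (show (g.r ^ 1 * g.s ^ 1 * (g.r - g.s) ^ 0 * (g.r + g.s) ^ 0 : F) ≠ 0 from mul_ne_zero (mul_ne_zero (mul_ne_zero (pow_ne_zero _ g.hr) (pow_ne_zero _ g.hs)) (pow_ne_zero _ g.hrs)) (pow_ne_zero _ g.hrps))
      linear_combination (g.r ^ 6 * g.s ^ 7 * g.b * g.p) * g.ha + (g.r ^ 6 * g.s ^ 6 * g.p) * g.hb
    · apply mul_left_cancel₀ (show (g.r ^ 3 * g.s ^ 3 * (g.r - g.s) ^ 0 * (g.r + g.s) ^ 1 : F) ≠ 0 from mul_ne_zero (mul_ne_zero (mul_ne_zero (pow_ne_zero _ g.hr) (pow_ne_zero _ g.hs)) (pow_ne_zero _ g.hrs)) (pow_ne_zero _ g.hrps))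
      linear_combination (g.r ^ 3 * g.s ^ 11 * g.b ^ 3 * g.p + (2) * g.r ^ 4 * g.s ^ 10 * g.b ^ 3 * g.p + g.r ^ 4 * g.s ^ 11 * g.a * g.b ^ 3 * g.p + (2) * g.r ^ 5 * g.s ^ 9 * g.b ^ 3 * g.p + (2) * g.r ^ 5 * g.s ^ 10 * g.a * g.b ^ 3 * g.p + g.r ^ 5 * g.s ^ 11 * g.a ^ 2 * g.b ^ 3 * g.p + g.r ^ 6 * g.s ^ 8 * g.b ^ 3 * g.p + (2) * g.r ^ 6 * g.s ^ 9 * g.a * g.b ^ 3 * g.p + (2) * g.r ^ 6 * g.s ^ 10 * g.a ^ 2 * g.b ^ 3 * g.p + g.r ^ 7 * g.s ^ 8 * g.a * g.b ^ 3 * g.p + (2) * g.r ^ 7 * g.s ^ 9 * g.a ^ 2 * g.b ^ 3 * g.p + g.r ^ 8 * g.s ^ 8 * g.a ^ 2 * g.b ^ 3 * g.p) * g.ha + (g.r ^ 3 * g.s ^ 8 * g.p + g.r ^ 3 * g.s ^ 9 * g.b * g.p + g.r ^ 3 * g.s ^ 10 * g.b ^ 2 * g.p + (2) * g.r ^ 4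 * g.s ^ 7 * g.p + (2) * g.r ^ 4 * g.s ^ 8 * g.b * g.p + (2) * g.r ^ 4 * g.s ^ 9 * g.b ^ 2 * g.p + (2) * g.r ^ 5 * g.s ^ 6 * g.p + (2) * g.r ^ 5 * g.s ^ 7 * g.b * g.p + (2) * g.r ^ 5 * g.s ^ 8 * g.b ^ 2 * g.p + g.r ^ 6 * g.s ^ 5 * g.p + g.r ^ 6 * g.s ^ 6 * g.b * g.p + g.r ^ 6 * g.s ^ 7 * g.b ^ 2 * g.p) * g.hb + (g.r ^ 3 * g.s ^ 7 + g.r ^ 4 * g.s ^ 6) * g.hp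
    · apply mul_left_cancel₀ (show (g.r ^ 3 * g.s ^ 3 * (g.r - g.s) ^ 0 * (g.r + g.s) ^ 1 : F) ≠ 0 from mul_ne_zero (mul_ne_zero (mul_ne_zero (pow_ne_zero _ g.hr) (pow_ne_zero _ g.hs)) (pow_ne_zero _ g.hrs)) (pow_ne_zero _ g.hrps))
      linear_combination ((-1) * g.r ^ 3 * g.s ^ 11 * g.p + (-2) * g.r ^ 4 * g.s ^ 10 * g.p + (-1) * g.r ^ 4 * g.s ^ 11 * g.a * g.p + (-2) * g.r ^ 5 * g.s ^ 9 * g.p + (-2) * g.r ^ 5 * g.s ^ 10 * g.a * g.p + (-1) * g.r ^ 5 * g.s ^ 11 * g.a ^ 2 * g.p + (-1) * g.r ^ 6 * g.s ^ 8 * g.p + (-2) * g.r ^ 6 * g.s ^ 9 * g.a * g.p + (-2) * g.r ^ 6 * g.s ^ 10 * g.a ^ 2 * g.p + (-1) * g.r ^ 7 * g.s ^ 8 * g.a * g.p + (-2) * g.r ^ 7 * g.s ^ 9 * g.a ^ 2 * g.p + (-1) * g.r ^ 8 * g.s ^ 8 * g.a ^ 2 * g.p) * g.ha + ((-1) * g.r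 ^ 6 * g.s ^ 8 * g.p + (-1) * g.r ^ 6 * g.s ^ 9 * g.b * g.p + (-1) * g.r ^ 6 * g.s ^ 10 * g.b ^ 2 * g.p + (-2) * g.r ^ 7 * g.s ^ 7 * g.p + (-2) * g.r ^ 7 * g.s ^ 8 * g.b * g.p + (-2) * g.r ^ 7 * g.s ^ 9 * g.b ^ 2 * g.p + (-2) * g.r ^ 8 * g.s ^ 6 * g.p + (-2) * g.r ^ 8 * g.s ^ 7 * g.b * g.p + (-2) * g.r ^ 8 * g.s ^ 8 * g.b ^ 2 * g.p + (-1) * g.r ^ 9 * g.s ^ 5 * g.p + (-1) * g.r ^ 9 * g.s ^ 6 * g.b * g.p + (-1) * g.r ^ 9 * g.s ^ 7 * g.b ^ 2 * g.p) * g.hb + ((-1) * g.r ^ 3 * g.s ^ 10 + (-2) * g.r ^ 4 * g.s ^ 9 + (-2) * g.r ^ 5 * g.s ^ 8 + (-1) * g.r ^ 6 * g.s ^ 7) * g.hp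
    · apply mul_left_cancel₀ (show (g.r ^ 0 * g.s ^ 0 * (g.r - g.s) ^ 0 * (g.r + g.s) ^ 1 : F) ≠ 0 from mul_ne_zero (mul_ne_zero (mul_ne_zero (pow_ne_zero _ g.hr) (pow_ne_zero _ g.hs)) (pow_ne_zero _ g.hrs)) (pow_ne_zero _ g.hrps))
      linear_combination (g.r * g.s ^ 9 + (2) * g.r ^ 2 * g.s ^ 8 + g.r ^ 3 * g.s ^ 7 + (-1) * g.r ^ 4 * g.s ^ 6 + (-2) * g.r ^ 5 * g.s ^ 5 + (-1) * g.r ^ 6 * g.s ^ 4) * g.hp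
    · apply mul_left_cancel₀ (show (g.r ^ 0 * g.s ^ 0 * (g.r - g.s) ^ 0 * (g.r + g.s) ^ 1 : F) ≠ 0 from mul_ne_zero (mul_ne_zero (mul_ne_zero (pow_ne_zero _ g.hr) (pow_ne_zero _ g.hs)) (pow_ne_zero _ g.hrs)) (pow_ne_zero _ g.hrps))
      linear_combination (g.r ^ 4 * g.s ^ 9 + (2) * g.r ^ 5 * g.s ^ 8 + g.r ^ 6 * g.s ^ 7) * g.hp
    · apply mul_left_cancel₀ (show (g.r ^ 3 * g.s ^ 3 * (g.r - g.s) ^ 0 * (g.r + g.s) ^ 1 : F) ≠ 0 from mul_ne_zero (mul_ne_zero (mul_ne_zero (pow_ne_zero _ g.hr) (pow_ne_zero _ g.hs)) (pow_ne_zero _ g.hrs)) (pow_ne_zero _ g.hrps))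
      linear_combination (g.r ^ 5 * g.s ^ 15 * g.p + (2) * g.r ^ 6 * g.s ^ 14 * g.p + g.r ^ 6 * g.s ^ 15 * g.a * g.p + (2) * g.r ^ 7 * g.s ^ 13 * g.p + (2) * g.r ^ 7 * g.s ^ 14 * g.a * g.p + g.r ^ 7 * g.s ^ 15 * g.a ^ 2 * g.p + g.r ^ 8 * g.s ^ 12 * g.p + (2) * g.r ^ 8 * g.s ^ 13 * g.a * g.p + (2) * g.r ^ 8 * g.s ^ 14 * g.a ^ 2 * g.p + g.r ^ 9 * g.s ^ 12 * g.a * g.p + (2) * g.r ^ 9 * g.s ^ 13 * g.a ^ 2 * g.p + g.r ^ 10 * g.s ^ 12 * g.a ^ 2 * g.p) * g.ha + (g.r ^ 8 * g.s ^ 12 * g.p + g.r ^ 8 * g.s ^ 13 * g.b * g.p + g.r ^ 8 * g.s ^ 14 * g.b ^ 2 * g.p + (2) * g.r ^ 9 * g.s ^ 11 * g.p + (2) * g.r ^ 9 * g.s ^ 12 * g.b * g.p + (2) * g.r ^ 9 * g.s ^ 13 * g.b ^ 2 * g.p + (2) * g.r ^ 10 * g.s ^ 10 * g.p + (2) * g.r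 ^ 10 * g.s ^ 11 * g.b * g.p + (2) * g.r ^ 10 * g.s ^ 12 * g.b ^ 2 * g.p + g.r ^ 11 * g.s ^ 9 * g.p + g.r ^ 11 * g.s ^ 10 * g.b * g.p + g.r ^ 11 * g.s ^ 11 * g.b ^ 2 * g.p) * g.hb + (g.r ^ 7 * g.s ^ 12 + (2) * g.r ^ 8 * g.s ^ 11 + (2) * g.r ^ 9 * g.s ^ 10 + g.r ^ 10 * g.s ^ 9) * g.hp
    · apply mul_left_cancel₀ (show (g.r ^ 0 * g.s ^ 0 * (g.r - g.s) ^ 0 * (g.r + g.s) ^ 1 : F) ≠ 0 from mul_ne_zero (mul_ne_zero (mul_ne_zero (pow_ne_zero _ g.hr) (pow_ne_zero _ g.hs)) (pow_ne_zero _ g.hrs)) (pow_ne_zero _ g.hrps))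
      linear_combination ((-1) * g.r ^ 4 * g.s ^ 12 + (-2) * g.r ^ 5 * g.s ^ 11 + (-2) * g.r ^ 6 * g.s ^ 10 + (-1) * g.r ^ 7 * g.s ^ 9) * g.hp
    · apply mul_left_cancel₀ (show (g.r ^ 3 * g.s ^ 3 * (g.r - g.s) ^ 0 * (g.r + g.s) ^ 1 : F) ≠ 0 from mul_ne_zero (mul_ne_zero (mul_ne_zero (pow_ne_zero _ g.hr) (pow_ne_zero _ g.hs)) (pow_ne_zero _ g.hrs)) (pow_ne_zero _ g.hrps))
      linear_combination (g.r ^ 8 * g.s ^ 18 * g.b ^ 3 * g.p + g.r ^ 9 * g.s ^ 17 * g.b ^ 3 * g.p + g.r ^ 9 * g.s ^ 18 * g.a * g.b ^ 3 * g.p + g.r ^ 10 * g.s ^ 17 * g.a * g.b ^ 3 * g.p + g.r ^ 10 * g.s ^ 18 * g.a ^ 2 * g.b ^ 3 * g.p + g.r ^ 11 * g.s ^ 17 * g.a ^ 2 * g.b ^ 3 * g.p) * g.ha + (g.r ^ 8 * g.s ^ 15 * g.p + g.r ^ 8 * g.s ^ 16 * g.b * g.p + g.r ^ 8 * g.s ^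 17 * g.b ^ 2 * g.p + g.r ^ 9 * g.s ^ 14 * g.p + g.r ^ 9 * g.s ^ 15 * g.b * g.p + g.r ^ 9 * g.s ^ 16 * g.b ^ 2 * g.p) * g.hb + ((-1) * g.r ^ 9 * g.s ^ 13 + (-1) * g.r ^ 10 * g.s ^ 12) * g.hp
    · apply mul_left_cancel₀ (show (g.r ^ 3 * g.s ^ 3 * (g.r - g.s) ^ 0 * (g.r + g.s) ^ 1 : F) ≠ 0 from mul_ne_zero (mul_ne_zero (mul_ne_zero (pow_ne_zero _ g.hr) (pow_ne_zero _ g.hs)) (pow_ne_zero _ g.hrs)) (pow_ne_zero _ g.hrps))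
      linear_combination ((-1) * g.r ^ 8 * g.s ^ 18 * g.p + (-1) * g.r ^ 9 * g.s ^ 17 * g.p + (-1) * g.r ^ 9 * g.s ^ 18 * g.a * g.p + (-1) * g.r ^ 10 * g.s ^ 17 * g.a * g.p + (-1) * g.r ^ 10 * g.s ^ 18 * g.a ^ 2 * g.p + (-1) * g.r ^ 11 * g.s ^ 17 * g.a ^ 2 * g.p) * g.ha + ((-1) * g.r ^ 11 * g.s ^ 15 * g.p + (-1) * g.r ^ 11 * g.s ^ 16 * g.b * g.p + (-1) * g.r ^ 11 * g.s ^ 17 * g.b ^ 2 * g.p + (-1) * g.r ^ 12 * g.s ^ 14 * g.p + (-1) * g.r ^ 12 * g.s ^ 15 * g.b * g.p + (-1) * g.r ^ 12 * g.s ^ 16 * g.b ^ 2 * g.p) * g.hb + (g.r ^ 9 * g.s ^ 16 + g.r ^ 10 * g.s ^ 15) * g.hp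
    · apply mul_left_cancel₀ (show (g.r ^ 3 * g.s ^ 3 * (g.r - g.s) ^ 0 * (g.r + g.s) ^ 0 : F) ≠ 0 from mul_ne_zero (mul_ne_zero (mul_ne_zero (pow_ne_zero _ g.hr) (pow_ne_zero _ g.hs)) (pow_ne_zero _ g.hrs)) (pow_ne_zero _ g.hrps))
      linear_combination ((-1) * g.r ^ 5 * g.s ^ 14 * g.b ^ 3 * g.p + (-1) * g.r ^ 6 * g.s ^ 13 * g.b ^ 3 * g.p + (-1) * g.r ^ 6 * g.s ^ 14 * g.a * g.b ^ 3 * g.p + (-1) * g.r ^ 7 * g.s ^ 12 * g.b ^ 3 * g.p + (-1) * g.r ^ 7 * g.s ^ 13 * g.a * g.b ^ 3 * g.p + (-1) * g.r ^ 7 * g.s ^ 14 * g.a ^ 2 * g.b ^ 3 * g.p + (-1) * g.r ^ 8 * g.s ^ 12 * g.a * g.b ^ 3 * g.p + (-1) * g.r ^ 8 * g.s ^ 13 * g.a ^ 2 * g.b ^ 3 * g.p + (-1) * g.r ^ 9 * g.s ^ 12 * g.a ^ 2 * g.b ^ 3 * g.p) * g.ha + ((-1) * g.r ^ 5 * g.s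 ^ 11 * g.p + (-1) * g.r ^ 5 * g.s ^ 12 * g.b * g.p + (-1) * g.r ^ 5 * g.s ^ 13 * g.b ^ 2 * g.p + (-1) * g.r ^ 6 * g.s ^ 10 * g.p + (-1) * g.r ^ 6 * g.s ^ 11 * g.b * g.p + (-1) * g.r ^ 6 * g.s ^ 12 * g.b ^ 2 * g.p + (-1) * g.r ^ 7 * g.s ^ 9 * g.p + (-1) * g.r ^ 7 * g.s ^ 10 * g.b * g.p + (-1) * g.r ^ 7 * g.s ^ 11 * g.b ^ 2 * g.p) * g.hb
    · ring1
    · apply mul_left_cancel₀ (show (g.r ^ 3 * g.s ^ 3 * (g.r - g.s) ^ 0 * (g.r + g.s) ^ 0 : F) ≠ 0 from mul_ne_zero (mul_ne_zero (mul_ne_zero (pow_ne_zero _ g.hr) (pow_ne_zero _ g.hs)) (pow_ne_zero _ g.hrs)) (pow_ne_zero _ g.hrps))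
      linear_combination (g.r ^ 2 * g.s ^ 3 * g.b * g.p + (-1) * g.r ^ 2 * g.s ^ 5 * g.b ^ 3 * g.p + (-1) * g.r ^ 3 * g.s ^ 5 * g.a * g.b ^ 3 * g.p + (-1) * g.r ^ 4 * g.s ^ 5 * g.a ^ 2 * g.b ^ 3 * g.p) * g.ha + ((-1) * g.r ^ 2 * g.s ^ 3 * g.b * g.p + (-1) * g.r ^ 2 * g.s ^ 4 * g.b ^ 2 * g.p) * g.hb
  rw [g.hS1, g.hS2] at key
  simp only [zero_mul, mul_zero, smul_zero, add_zero, zero_add] at key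
  rw [sub_sub, sub_eq_zero] at key
  exact key

theorem main : (g.E1112 * g.E112 - (g.r ^ 3) • (g.E112 * g.E1112)) * g.f1
    - g.f1 * (g.E1112 * g.E112 - (g.r ^ 3) • (g.E112 * g.E1112)) = 0 := by
  simp only [mul_add, add_mul, mul_sub, sub_mul, smul_mul_assoc, mul_smul_comm,
    smul_smul, smul_sub, smul_add, mul_assoc, L2z, L3z, L2, L3, W2z, W3z, W2, W3, serre_z]
  match_scalars
  · ring1
  · apply mul_left_cancel₀ (show (g.r ^ 0 * g.s ^ 0 * (g.r - g.s) ^ 0 * (g.r + g.s) ^ 1 : F) ≠ 0 from mul_ne_zero (mul_ne_zero (mul_ne_zero (pow_ne_zero _ g.hr) (pow_ne_zero _ g.hs)) (pow_ne_zero _ g.hrs)) (pow_ne_zero _ g.hrps))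
    linear_combination (g.r * g.s ^ 5 + (2) * g.r ^ 2 * g.s ^ 4 + g.r ^ 3 * g.s ^ 3 + (-1) * g.r ^ 4 * g.s ^ 2 + (-2) * g.r ^ 5 * g.s + (-1) * g.r ^ 6) * g.hp
  · ring1
  · ring1

end Gen

open MvPolynomial in
lemma K_r_ne_zero : r ≠ 0 := by
  simp only [r]
  rw [Ne, IsFractionRing.to_map_eq_zero_iff]
  exact MvPolynomial.X_ne_zero (R := ℚ) 0

open MvPolynomial in
lemma K_s_ne_zero : s ≠ 0 := by
  simp only [s]
  rw [Ne, IsFractionRing.to_map_eq_zero_iff]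
  exact MvPolynomial.X_ne_zero (R := ℚ) 1

open MvPolynomial in
lemma K_rs_ne_zero : r - s ≠ 0 := by
  simp only [r, s, ← map_sub]
  rw [Ne, IsFractionRing.to_map_eq_zero_iff]
  intro h
  have := congrArg (MvPolynomial.eval (fun i : Fin 2 => if i = 0 then (1 : ℚ) else 0)) h
  simp at this

open MvPolynomial in
lemma K_rps_ne_zero : r + s ≠ 0 := by
  simp only [r, s, ← map_add]
  rw [Ne, IsFractionRing.to_map_eq_zero_iff]
  intro h
  have := congrArg (MvPolynomial.eval (fun i : Fin 2 => if i = 0 then (1 : ℚ) else 0)) h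
  simp at this
/-- In `U` the identity `[E₁₁₁₂E₁₁₂ - r³E₁₁₂E₁₁₁₂, f₁] = 0` holds. -/
theorem stmt9 {U : Type*} [Ring U] [Algebra K U] (d : G2 U) :
    (d.E1112 * d.E112 - (r ^ 3) • (d.E112 * d.E1112)) * d.f1
      - d.f1 * (d.E1112 * d.E112 - (r ^ 3) • (d.E112 * d.E1112)) = 0 := by
  have hw1e1 : (d.ω1 : U) * d.e1 = (r * s⁻¹) • (d.e1 * (d.ω1 : U)) := by
    have h := congrArg (fun x : U => x * ((d.ω1 : Uˣ) : U)) d.G2_a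
    simpa [mul_assoc, smul_mul_assoc] using h
  have hw1e2 : (d.ω1 : U) * d.e2 = (s ^ 3) • (d.e2 * (d.ω1 : U)) := by
    have h := congrArg (fun x : U => x * ((d.ω1 : Uˣ) : U)) d.G2_c
    simpa [mul_assoc, smul_mul_assoc] using h
  have hwe1 : (d.ω1' : U) * d.e1 = (r⁻¹ * s) • (d.e1 * (d.ω1' : U)) := by
    have h := congrArg (fun x : U => x * ((d.ω1' : Uˣ) : U)) d.G3_a
    simpa [mul_assoc, smul_mul_assoc] using h
  have hwe2 : (d.ω1' : U) * d.e2 = (r ^ 3) • (d.e2 * (d.ω1' : U)) := by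
    have h := congrArg (fun x : U => x * ((d.ω1' : Uˣ) : U)) d.G3_c
    simpa [mul_assoc, smul_mul_assoc] using h
  have he1f1 : d.e1 * d.f1 = d.f1 * d.e1 + (r - s)⁻¹ • (d.ω1 : U) - (r - s)⁻¹ • (d.ω1' : U) := by
    have h := d.G4_a
    rw [sub_eq_iff_eq_add, smul_sub] at h
    rw [h]; abel
  have hS1 : d.e2 * (d.e2 * d.e1) - ((r⁻¹) ^ 3 + (s⁻¹) ^ 3) • (d.e2 * (d.e1 * d.e2))
      + ((r⁻¹) ^ 3 * (s⁻¹) ^ 3) • (d.e1 * (d.e2 * d.e2)) = 0 := by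
    have h := d.G5_a
    rw [show d.e2 ^ 2 * d.e1 = d.e2 * (d.e2 * d.e1) by rw [pow_two, mul_assoc],
      show d.e2 * d.e1 * d.e2 = d.e2 * (d.e1 * d.e2) from mul_assoc _ _ _,
      show d.e1 * d.e2 ^ 2 = d.e1 * (d.e2 * d.e2) by rw [pow_two],
      show ((r ^ 3)⁻¹ + (s ^ 3)⁻¹ : K) = (r⁻¹) ^ 3 + (s⁻¹) ^ 3 by rw [inv_pow, inv_pow],
      show (((r * s) ^ 3)⁻¹ : K) = (r⁻¹) ^ 3 * (s⁻¹) ^ 3 by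
        rw [mul_pow, mul_inv, inv_pow, inv_pow]] at h
    exact h
  have hS2 : d.e1 * (d.e1 * (d.e1 * (d.e1 * d.e2)))
      - ((r + s) * (r ^ 2 + s ^ 2)) • (d.e1 * (d.e1 * (d.e1 * (d.e2 * d.e1))))
      + (r * s * (r ^ 2 + s ^ 2) * (r ^ 2 + r * s + s ^ 2)) • (d.e1 * (d.e1 * (d.e2 * (d.e1 * d.e1))))
      - ((r * s) ^ 3 * (r + s) * (r ^ 2 + s ^ 2)) • (d.e1 * (d.e2 * (d.e1 * (d.e1 * d.e1))))
      + ((r * s) ^ 6) • (d.e2 * (d.e1 * (d.e1 * (d.e1 * d.e1)))) = 0 := by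
    have h := d.G5_b
    rw [show d.e1 ^ 4 * d.e2 = d.e1 * (d.e1 * (d.e1 * (d.e1 * d.e2))) by
        simp only [pow_succ, pow_zero, one_mul, mul_assoc],
      show d.e1 ^ 3 * d.e2 * d.e1 = d.e1 * (d.e1 * (d.e1 * (d.e2 * d.e1))) by
        simp only [pow_succ, pow_zero, one_mul, mul_assoc],
      show d.e1 ^ 2 * d.e2 * d.e1 ^ 2 = d.e1 * (d.e1 * (d.e2 * (d.e1 * d.e1))) by
        simp only [pow_succ, pow_zero, one_mul, mul_assoc],
      show d.e1 * d.e2 * d.e1 ^ 3 = d.e1 * (d.e2 * (d.e1 * (d.e1 * d.e1))) by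
        simp only [pow_succ, pow_zero, one_mul, mul_assoc],
      show d.e2 * d.e1 ^ 4 = d.e2 * (d.e1 * (d.e1 * (d.e1 * d.e1))) by
        simp only [pow_succ, pow_zero, one_mul, mul_assoc]] at h
    exact h
  exact Gen.main
    { r := r
      s := s
      a := r⁻¹
      b := s⁻¹
      t := (r - s)⁻¹
      p := (r + s)⁻¹
      e1 := d.e1
      e2 := d.e2
      f1 := d.f1
      w := (d.ω1' : U)
      w1 := (d.ω1 : U)
      ha := mul_inv_cancel₀ K_r_ne_zero
      hb := mul_inv_cancel₀ K_s_ne_zero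
      ht := mul_inv_cancel₀ K_rs_ne_zero
      hp := mul_inv_cancel₀ K_rps_ne_zero
      he2f1 := d.G4_d
      he1f1 := he1f1
      hw1e1 := hw1e1
      hw1e2 := hw1e2
      hwe1 := hwe1
      hwe2 := hwe2
      hS1 := hS1
      hS2 := hS2 }
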